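/- Let d ≥ 3, k ∈ ℕ, let v be a multiple of d with v' = v/d, and suppose there is a (v,k,2) covering design with d blocks admitting a multi-matching (subsets U_i ⊆ B_i of size v' partitioning [v]). Then for every n ≥ 1 the replicated construction — sequences s_i = (A_i, U_i^1,...,U_i^n, R_i^n,...,R_i^1), where B^1,...,B^n are n disjoint copies of the covering design, R_i^j = B_i^j \ U_i^j, and A_i is a set of m = nk−(n−1)v' fresh elements per sequence — is a (d, (nk+v')d, 3nk−(2n−3)v') prefix covering design. -/

import Mathlib

open scoped BigOperators

/-- `x` occurs at 1-indexed level `ℓ` in some sequence of `s`. -/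
def OccursAt {d K : ℕ} (s : Fin d → List (Fin K)) (x : Fin K) (ℓ : ℕ) : Prop :=
  1 ≤ ℓ ∧ ∃ i : Fin d, (s i)[ℓ - 1]? = some x

/-- `ℓ_min(x)`: the minimal 1-indexed level at which `x` occurs in any sequence. -/
noncomputable def lMin {d K : ℕ} (s : Fin d → List (Fin K)) (x : Fin K) : ℕ :=
  sInf {ℓ | OccursAt s x ℓ}

/-- `ℓ_max(x)`: the maximal 1-indexed level at which `x` occurs in any sequence. -/
noncomputable def lMax {d K : ℕ} (s : Fin d → List (Fin K)) (x : Fin K) : ℕ :=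
  sSup {ℓ | OccursAt s x ℓ}

/-- Total number of occurrences of `x` among the sequences. -/
def totalCount {d K : ℕ} (s : Fin d → List (Fin K)) (x : Fin K) : ℕ :=
  ∑ i : Fin d, (s i).count x

/-- Triplet condition: every 3-element subset of `[K]` is covered by at most three
prefixes of total length at most `α`. -/
def TripletCond (d K α : ℕ) (s : Fin d → List (Fin K)) : Prop :=
  ∀ a b c : Fin K, a ≠ b → a ≠ c → b ≠ c →
    ∃ (i i' i'' : Fin d) (ℓ ℓ' ℓ'' : ℕ), ℓ + ℓ' + ℓ'' ≤ α ∧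
      ∀ x : Fin K, (x = a ∨ x = b ∨ x = c) →
        x ∈ (s i).take ℓ ∨ x ∈ (s i').take ℓ' ∨ x ∈ (s i'').take ℓ''

/-- Singleton condition: `ℓ_min(x) + ℓ_max(x) ≤ α + 1` for every repeated element `x`. -/
def SingletonCond (d K α : ℕ) (s : Fin d → List (Fin K)) : Prop :=
  ∀ x : Fin K, 2 ≤ totalCount s x → lMin s x + lMax s x ≤ α + 1

/-- A `(d, K, α)` prefix covering design. -/
def IsPCD (d K α : ℕ) (s : Fin d → List (Fin K)) : Prop :=
  TripletCond d K α s ∧ SingletonCond d K α s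

/-- A convenient embedding of a doubly-indexed element into `Fin N`. -/
def pcdElem (off a b N : ℕ) (h : off + a * b ≤ N) (i : Fin a) (t : Fin b) : Fin N :=
  ⟨off + (i.1 * b + t.1), by
    have hi := i.isLt
    have ht := t.isLt
    have h2 : i.1 * b + t.1 < a * b := by
      calc i.1 * b + t.1 < i.1 * b + b := by omega
        _ = (i.1 + 1) * b := (Nat.succ_mul _ _).symm
        _ ≤ a * b := Nat.mul_le_mul_right _ hi
    omega⟩

/-- A `(v, k, 2)` covering design with `d` blocks. -/
def IsCoveringDesign (v k d : ℕ) (B : Fin d → Finset (Fin v)) : Prop :=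
  (∀ i, (B i).card = k) ∧ ∀ x y : Fin v, x ≠ y → ∃ i, x ∈ B i ∧ y ∈ B i

/-- The set of qualities `K/α` of `(d, K, α)` prefix covering designs; `γ_d` is its supremum. -/
def gammaSet (d : ℕ) : Set ℝ :=
  {q | ∃ (K α : ℕ) (s : Fin d → List (Fin K)),
    4 ≤ K ∧ 0 < α ∧ IsPCD d K α s ∧ q = (K : ℝ) / (α : ℝ)}

/-!
Write `r = k - v'`, so that `m = n r + v'` and `α = 3 m + n v'`. In `s_i`, the fresh elements
lie in the first `m` positions; the `j`-th copy of a point is reached at level `m + (j + 1) v'`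
in the sequence whose matched part contains the point, and any two points of copies `j ≤ j'`
are reached at level `m + n v' + (n - j) r` in a sequence whose block contains both, while no
copy `j` occurs beyond that level. The multi-matching forces `k ≥ 2 v'`, i.e. `v' ≤ r`, hence
`(j + 1) v' + (n - j) r ≤ n r + v' = m` for `j ≤ n`. This one inequality gives the singleton
condition, and the triplet condition once a triple is sorted by copy index with the fresh
elements first: the last two elements are covered together when both are copies, every other
element alone.
-/

namespace List

variable {α : Type*} {x : α}

theorem IsPrefix.mem_take {p l : List α} (h : p <+: l) (hx : x ∈ p) {ℓ : ℕ}
    (hℓ : p.length ≤ ℓ) : x ∈ l.take ℓ := by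
  rw [prefix_iff_eq_take.1 h] at hx
  exact take_subset_take_left l hℓ hx

theorem length_flatten_of_forall_length_eq {L : List (List α)} {c : ℕ}
    (hL : ∀ l ∈ L, l.length = c) : L.flatten.length = L.length * c := by
  rw [length_flatten, map_congr_left hL, map_const', sum_replicate, smul_eq_mul]

theorem mem_take_flatten_of_mem {L : List (List α)} {c t : ℕ} (hL : ∀ l ∈ L, l.length = c)
    {l : List α} (hl : l ∈ L.take t) (hx : x ∈ l) : x ∈ L.flatten.take (t * c) := by
  have hpre : (L.take t).flatten <+: L.flatten := by
    conv_rhs => rw [← take_append_drop t L, flatten_append]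
    exact prefix_append _ _
  refine hpre.mem_take (mem_flatten.2 ⟨l, hl, hx⟩) ?_
  rw [length_flatten_of_forall_length_eq fun l hl => hL l (mem_of_mem_take hl)]
  exact Nat.mul_le_mul_right c (length_take_le t L)

theorem exists_mem_drop_of_mem_drop_flatten {L : List (List α)} {c t : ℕ}
    (hL : ∀ l ∈ L, l.length = c) (ht : t ≤ L.length) (hx : x ∈ L.flatten.drop (t * c)) :
    ∃ l ∈ L.drop t, x ∈ l := by
  have hlen : (L.take t).flatten.length = t * c := by
    rw [length_flatten_of_forall_length_eq fun l hl => hL l (mem_of_mem_take hl),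
      length_take_of_le ht]
  rw [← take_append_drop t L, flatten_append, drop_left' hlen] at hx
  exact mem_flatten.1 hx

theorem mem_take_ofFn {n : ℕ} {f : Fin n → α} {t : ℕ} {a : α} :
    a ∈ (ofFn f).take t ↔ ∃ j : Fin n, (j : ℕ) < t ∧ f j = a := by
  simp only [mem_take_iff_getElem, length_ofFn, List.getElem_ofFn, lt_min_iff]
  exact ⟨fun ⟨j, hj, h⟩ => ⟨⟨j, hj.2⟩, hj.1, h⟩, fun ⟨j, hj, h⟩ => ⟨j, ⟨hj, j.2⟩, h⟩⟩

theorem length_eq_of_mem_ofFn {n c : ℕ} {f : Fin n → List α} (hf : ∀ j, (f j).length = c)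
    {l : List α} (hl : l ∈ ofFn f) : l.length = c := by
  obtain ⟨j, rfl⟩ := mem_ofFn.1 hl
  exact hf j

theorem mem_drop_ofFn {n : ℕ} {f : Fin n → α} {t : ℕ} {a : α} :
    a ∈ (ofFn f).drop t ↔ ∃ j : Fin n, t ≤ (j : ℕ) ∧ f j = a := by
  simp only [mem_drop_iff_getElem, length_ofFn, List.getElem_ofFn]
  refine ⟨fun ⟨j, hj, h⟩ => ⟨⟨t + j, by omega⟩, by simp, h⟩, fun ⟨j, hj, h⟩ => ?_⟩
  exact ⟨j - t, by omega, by simpa [Nat.add_sub_cancel' hj] using h⟩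

end List

section ReplicatedSeq

variable {α : Type*} {n a u r : ℕ}

def replicatedSeq (A : List α) (U R : Fin n → List α) : List α :=
  A ++ (List.ofFn U).flatten ++ (List.ofFn R).reverse.flatten

variable {A : List α} {U R : Fin n → List α} {x : α}

theorem length_flatten_ofFn (hU : ∀ j, (U j).length = u) :
    (List.ofFn U).flatten.length = n * u := by
  rw [List.length_flatten_of_forall_length_eq (fun l => List.length_eq_of_mem_ofFn hU),
    List.length_ofFn]

theorem mem_take_replicatedSeq_of_mem_left (hA : A.length = a) (hx : x ∈ A) :
    x ∈ (replicatedSeq A U R).take a := by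
  rw [← hA, replicatedSeq, List.append_assoc, List.take_left' rfl]
  exact hx

theorem mem_take_replicatedSeq_of_mem_mid (hA : A.length = a) (hU : ∀ j, (U j).length = u)
    (j : Fin n) (hx : x ∈ U j) : x ∈ (replicatedSeq A U R).take (a + (j + 1) * u) := by
  rw [← hA, replicatedSeq, List.append_assoc, List.take_length_add_append, List.take_append]
  refine List.mem_append_right _ (List.mem_append_left _ ?_)
  exact List.mem_take_flatten_of_mem (fun l => List.length_eq_of_mem_ofFn hU)
    (List.mem_take_ofFn.2 ⟨j, by omega, rfl⟩) hx

theorem mem_take_replicatedSeq_of_mem_mid_or_right (hA : A.length = a) (hU : ∀ j, (U j).length = u)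
    (hR : ∀ j, (R j).length = r) {J : ℕ} (j : Fin n) (hJ : J ≤ j) (hx : x ∈ U j ∨ x ∈ R j) :
    x ∈ (replicatedSeq A U R).take (a + n * u + (n - J) * r) := by
  rw [← hA, replicatedSeq, List.append_assoc, ← length_flatten_ofFn hU, Nat.add_assoc,
    List.take_length_add_append, List.take_length_add_append]
  refine List.mem_append_right _ ?_
  rcases hx with hx | hx
  · exact List.mem_append_left _ (List.mem_flatten.2 ⟨U j, List.mem_ofFn.2 ⟨j, rfl⟩, hx⟩)
  · refine List.mem_append_right _ (List.mem_take_flatten_of_mem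
      (fun l hl => List.length_eq_of_mem_ofFn hR (List.mem_reverse.1 hl)) ?_ hx)
    rw [List.take_reverse, List.mem_reverse, List.length_ofFn, Nat.sub_sub_self (by omega)]
    exact List.mem_drop_ofFn.2 ⟨j, hJ, rfl⟩

theorem exists_mem_of_mem_drop_replicatedSeq (hA : A.length = a)
    (hx : x ∈ (replicatedSeq A U R).drop a) : ∃ j, x ∈ U j ∨ x ∈ R j := by
  rw [← hA, replicatedSeq, List.append_assoc, List.drop_left' rfl, List.mem_append,
    List.mem_flatten, List.mem_flatten] at hx
  rcases hx with ⟨l, hl, hx⟩ | ⟨l, hl, hx⟩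
  · obtain ⟨j, rfl⟩ := List.mem_ofFn.1 hl
    exact ⟨j, Or.inl hx⟩
  · obtain ⟨j, rfl⟩ := List.mem_ofFn.1 (List.mem_reverse.1 hl)
    exact ⟨j, Or.inr hx⟩

theorem exists_mem_right_of_mem_drop_replicatedSeq (hA : A.length = a)
    (hU : ∀ j, (U j).length = u) (hR : ∀ j, (R j).length = r) {J : ℕ} (hJ : J ≤ n)
    (hx : x ∈ (replicatedSeq A U R).drop (a + n * u + (n - J) * r)) :
    ∃ j : Fin n, (j : ℕ) < J ∧ x ∈ R j := by
  rw [← hA, replicatedSeq, List.append_assoc, ← length_flatten_ofFn hU, Nat.add_assoc,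
    List.drop_length_add_append, List.drop_length_add_append] at hx
  obtain ⟨l, hl, hx⟩ := List.exists_mem_drop_of_mem_drop_flatten
    (fun l hl => List.length_eq_of_mem_ofFn hR (List.mem_reverse.1 hl)) (by simp) hx
  rw [List.drop_reverse, List.mem_reverse, List.length_ofFn, Nat.sub_sub_self hJ] at hl
  obtain ⟨j, hj, rfl⟩ := List.mem_take_ofFn.1 hl
  exact ⟨j, hj, hx⟩

end ReplicatedSeq

section PrefixCovering

variable {d K α : ℕ} {s : Fin d → List (Fin K)} {x : Fin K}

theorem lMin_le_of_mem_take {i : Fin d} {L : ℕ} (h : x ∈ (s i).take L) : lMin s x ≤ L := by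
  obtain ⟨p, hp, rfl⟩ := List.mem_take_iff_getElem.1 h
  have hocc : OccursAt s (s i)[p] (p + 1) := ⟨by omega, i, by simp⟩
  exact (Nat.sInf_le hocc).trans (by omega)

theorem lMax_le_of_forall_not_mem_drop {L : ℕ} (h : ∀ i, x ∉ (s i).drop L) :
    lMax s x ≤ L := by
  refine csSup_le' fun ℓ ⟨hℓ, i, hi⟩ => ?_
  by_contra! hL
  refine h i (List.mem_iff_getElem?.2 ⟨ℓ - 1 - L, ?_⟩)
  rwa [List.getElem?_drop, Nat.add_sub_cancel' (by omega)]

variable (α s) in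
def TripleCovered (a b c : Fin K) : Prop :=
  ∃ (i i' i'' : Fin d) (ℓ ℓ' ℓ'' : ℕ), ℓ + ℓ' + ℓ'' ≤ α ∧
    ∀ x : Fin K, (x = a ∨ x = b ∨ x = c) →
      x ∈ (s i).take ℓ ∨ x ∈ (s i').take ℓ' ∨ x ∈ (s i'').take ℓ''

namespace TripleCovered

variable {a b c : Fin K}

theorem of_singles {i₁ i₂ i₃ : Fin d} {ℓ₁ ℓ₂ ℓ₃ : ℕ} (h : ℓ₁ + ℓ₂ + ℓ₃ ≤ α)
    (ha : a ∈ (s i₁).take ℓ₁) (hb : b ∈ (s i₂).take ℓ₂) (hc : c ∈ (s i₃).take ℓ₃) :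
    TripleCovered α s a b c :=
  ⟨i₁, i₂, i₃, ℓ₁, ℓ₂, ℓ₃, h, by rintro x (rfl | rfl | rfl) <;> simp [*]⟩

theorem of_single_pair {i₁ i₂ : Fin d} {ℓ₁ ℓ₂ : ℕ} (h : ℓ₁ + ℓ₂ ≤ α)
    (ha : a ∈ (s i₁).take ℓ₁) (hb : b ∈ (s i₂).take ℓ₂) (hc : c ∈ (s i₂).take ℓ₂) :
    TripleCovered α s a b c :=
  ⟨i₁, i₂, i₁, ℓ₁, ℓ₂, 0, by omega, by rintro x (rfl | rfl | rfl) <;> simp [*]⟩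

theorem mono {a' b' c' : Fin K} (h : TripleCovered α s a' b' c')
    (hsub : ∀ x, (x = a ∨ x = b ∨ x = c) → x = a' ∨ x = b' ∨ x = c') :
    TripleCovered α s a b c :=
  let ⟨i, i', i'', ℓ, ℓ', ℓ'', hα, hx⟩ := h
  ⟨i, i', i'', ℓ, ℓ', ℓ'', hα, fun x h => hx x (hsub x h)⟩

end TripleCovered

theorem tripletCond_of_sorted (ρ : Fin K → ℕ)
    (h : ∀ a b c, ρ a ≤ ρ b → ρ b ≤ ρ c → TripleCovered α s a b c) :
    TripletCond d K α s := by
  intro a b c _ _ _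
  have perm : ∀ a' b' c', (∀ x, (x = a ∨ x = b ∨ x = c) → x = a' ∨ x = b' ∨ x = c') →
      ρ a' ≤ ρ b' → ρ b' ≤ ρ c' → TripleCovered α s a b c :=
    fun a' b' c' hsub h₁ h₂ => (h a' b' c' h₁ h₂).mono hsub
  rcases le_total (ρ a) (ρ b) with hab | hba
  · rcases le_total (ρ b) (ρ c) with hbc | hcb
    · exact perm a b c (by tauto) hab hbc
    · rcases le_total (ρ a) (ρ c) with hac | hca
      · exact perm a c b (by tauto) hac hcb
      · exact perm c a b (by tauto) hca hab
  · rcases le_total (ρ a) (ρ c) with hac | hca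
    · exact perm b a c (by tauto) hba hac
    · rcases le_total (ρ b) (ρ c) with hbc | hcb
      · exact perm b c a (by tauto) hbc hca
      · exact perm c b a (by tauto) hcb hba

end PrefixCovering

theorem two_mul_le_of_covers_pairs {d v v' k : ℕ} (hd : 2 ≤ d) (hv : v = v' * d)
    (b : Fin d → List (Fin v)) (hlen : ∀ i, (b i).length = k)
    (hcover : ∀ x y : Fin v, x ≠ y → ∃ i, x ∈ b i ∧ y ∈ b i) (hmem : ∀ x, ∃ i, x ∈ b i) :
    2 * v' ≤ k := by
  classical
  have hblock : ∀ i, (Finset.univ.filter (· ∈ b i)).card ≤ k := fun i =>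
    calc (Finset.univ.filter (· ∈ b i)).card ≤ (b i).toFinset.card :=
          Finset.card_le_card fun y hy => List.mem_toFinset.2 (Finset.mem_filter.1 hy).2
      _ ≤ k := (hlen i).symm ▸ List.toFinset_card_le _
  by_cases hfull : ∃ i, ∀ y, y ∈ b i
  · obtain ⟨i, hi⟩ := hfull
    have hvk : v ≤ k := by
      simpa [Finset.filter_true_of_mem fun y _ => hi y] using hblock i
    have : 2 * v' ≤ v' * d := by rw [mul_comm]; exact Nat.mul_le_mul_left v' hd
    omega
  · push Not at hfull
    -- a point of a non-full block lies in a second block, together with a point it misses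
    have hdeg : ∀ x : Fin v, 2 ≤ (Finset.univ.filter (x ∈ b ·)).card := by
      intro x
      obtain ⟨i, hxi⟩ := hmem x
      obtain ⟨y, hyi⟩ := hfull i
      obtain ⟨i', hxi', hyi'⟩ := hcover x y (by rintro rfl; exact hyi hxi)
      exact Finset.one_lt_card.2 ⟨i, by simpa using hxi, i', by simpa using hxi',
        by rintro rfl; exact hyi hyi'⟩
    have hcount := Finset.card_mul_le_card_mul (fun (x : Fin v) (i : Fin d) => x ∈ b i)
      (s := Finset.univ) (t := Finset.univ) (fun x _ => hdeg x) (fun i _ => hblock i)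
    simp only [Finset.card_univ, Fintype.card_fin] at hcount
    rw [hv] at hcount
    nlinarith

section PcdElem

variable {off a b N : ℕ} {h : off + a * b ≤ N}

theorem val_pcdElem (i : Fin a) (t : Fin b) :
    (pcdElem off a b N h i t : ℕ) = off + (i * b + t) := rfl

theorem val_pcdElem_lt (i : Fin a) (t : Fin b) : (pcdElem off a b N h i t : ℕ) < off + a * b := by
  have : ((i : ℕ) + 1) * b ≤ a * b := Nat.mul_le_mul_right b i.2
  rw [Nat.add_one_mul] at this
  rw [val_pcdElem]
  omega

theorem val_pcdElem_sub_div (i : Fin a) (t : Fin b) :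
    ((pcdElem off a b N h i t : ℕ) - off) / b = i := by
  rw [val_pcdElem, Nat.add_sub_cancel_left, Nat.mul_comm, Nat.mul_add_div t.pos,
    Nat.div_eq_of_lt t.2, Nat.add_zero]

theorem exists_pcdElem_eq (e : Fin N) (h₁ : off ≤ e) (h₂ : (e : ℕ) < off + a * b) :
    ∃ i t, pcdElem off a b N h i t = e := by
  have hb : 0 < b := Nat.pos_of_ne_zero fun hb => by simp [hb] at h₂; omega
  refine ⟨⟨(e - off) / b, (Nat.div_lt_iff_lt_mul hb).2 (by omega)⟩,
    ⟨(e - off) % b, Nat.mod_lt _ hb⟩, Fin.ext ?_⟩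
  rw [val_pcdElem, Nat.div_add_mod']
  omega

end PcdElem

section CopyRank

variable {n v d m N : ℕ}

def copyRank (n v : ℕ) (e : Fin N) : ℕ :=
  if (e : ℕ) < n * v then e / v + 1 else 0

theorem copyRank_pcdElem_zero {h : 0 + n * v ≤ N} (j : Fin n) (x : Fin v) :
    copyRank n v (pcdElem 0 n v N h j x) = j + 1 := by
  have hlt := (val_pcdElem_lt (h := h) j x).trans_eq (Nat.zero_add _)
  have hdiv := val_pcdElem_sub_div (h := h) j x
  simp only [copyRank, if_pos hlt, Nat.sub_zero] at hdiv ⊢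
  rw [hdiv]

theorem copyRank_pcdElem_of_le {off a b : ℕ} {h : off + a * b ≤ N} (hoff : n * v ≤ off)
    (i : Fin a) (t : Fin b) : copyRank n v (pcdElem off a b N h i t) = 0 := by
  rw [copyRank, if_neg (by rw [val_pcdElem]; omega)]

theorem exists_pcdElem_eq_or_exists_pcdElem_eq (e : Fin (n * v + d * m)) :
    (∃ j x, pcdElem 0 n v (n * v + d * m) (by simp) j x = e) ∨
      ∃ i t, pcdElem (n * v) d m (n * v + d * m) le_rfl i t = e :=
  if he : (e : ℕ) < n * v then .inl (exists_pcdElem_eq e (Nat.zero_le _) (by omega))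
  else .inr (exists_pcdElem_eq e (by omega) e.2)

end CopyRank

theorem add_one_mul_add_sub_mul_le {n r v' j J : ℕ} (hr : v' ≤ r) (hj : j ≤ J) (hJ : J ≤ n) :
    (j + 1) * v' + (n - J) * r ≤ n * r + v' := by
  have h₁ : j * v' ≤ J * r := Nat.mul_le_mul hj hr
  have h₂ : (n - J) * r + J * r = n * r := by rw [← Nat.add_mul, Nat.sub_add_cancel hJ]
  rw [Nat.add_one_mul]
  omega

section ReplicatedDesign

variable {d n m v r K : ℕ} (b : Fin d → List (Fin v)) (v' : ℕ)
  (copy : Fin n → Fin v → Fin K) (fresh : Fin d → Fin m → Fin K)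

def replicatedDesign (i : Fin d) : List (Fin K) :=
  replicatedSeq (List.ofFn (fresh i)) (fun j => ((b i).take v').map (copy j))
    (fun j => ((b i).drop v').map (copy j))

theorem fresh_mem_take_replicatedDesign (i : Fin d) (t : Fin m) :
    fresh i t ∈ (replicatedDesign b v' copy fresh i).take m :=
  mem_take_replicatedSeq_of_mem_left List.length_ofFn (List.mem_ofFn.2 ⟨t, rfl⟩)

variable {b v' copy fresh}

theorem copy_mem_take_replicatedDesign_of_mem_take (hU : ∀ i, ((b i).take v').length = v')
    {i : Fin d} {y : Fin v} (hy : y ∈ (b i).take v') (j : Fin n) :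
    copy j y ∈ (replicatedDesign b v' copy fresh i).take (m + (j + 1) * v') :=
  mem_take_replicatedSeq_of_mem_mid List.length_ofFn (fun _ => (List.length_map _).trans (hU i)) j
    (List.mem_map_of_mem hy)

theorem copy_mem_take_replicatedDesign (hU : ∀ i, ((b i).take v').length = v')
    (hR : ∀ i, ((b i).drop v').length = r) {i : Fin d} {y : Fin v} (hy : y ∈ b i) {J : ℕ}
    (j : Fin n) (hJ : J ≤ j) :
    copy j y ∈ (replicatedDesign b v' copy fresh i).take (m + n * v' + (n - J) * r) := by
  rw [← List.take_append_drop v' (b i), List.mem_append] at hy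
  exact mem_take_replicatedSeq_of_mem_mid_or_right List.length_ofFn
    (fun _ => (List.length_map _).trans (hU i)) (fun _ => (List.length_map _).trans (hR i)) j hJ
    (hy.imp List.mem_map_of_mem List.mem_map_of_mem)

theorem exists_copy_eq_of_mem_drop_replicatedDesign {i : Fin d} {e : Fin K}
    (he : e ∈ (replicatedDesign b v' copy fresh i).drop m) : ∃ j y, copy j y = e := by
  obtain ⟨j, he | he⟩ := exists_mem_of_mem_drop_replicatedSeq List.length_ofFn he <;>
  · obtain ⟨y, -, rfl⟩ := List.mem_map.1 he
    exact ⟨j, y, rfl⟩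

theorem exists_copy_lt_of_mem_drop_replicatedDesign (hU : ∀ i, ((b i).take v').length = v')
    (hR : ∀ i, ((b i).drop v').length = r) {i : Fin d} {e : Fin K} {J : ℕ} (hJ : J ≤ n)
    (he : e ∈ (replicatedDesign b v' copy fresh i).drop (m + n * v' + (n - J) * r)) :
    ∃ j : Fin n, (j : ℕ) < J ∧ ∃ y, copy j y = e := by
  obtain ⟨j, hj, he⟩ := exists_mem_right_of_mem_drop_replicatedSeq List.length_ofFn
    (fun _ => (List.length_map _).trans (hU i)) (fun _ => (List.length_map _).trans (hR i)) hJ he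
  obtain ⟨y, -, rfl⟩ := List.mem_map.1 he
  exact ⟨j, hj, y, rfl⟩

variable (copy fresh) in
theorem exists_copy_mem_take_replicatedDesign (hU : ∀ i, ((b i).take v').length = v')
    (hmatch : ∀ x, ∃ i, x ∈ (b i).take v') (j : Fin n) (y : Fin v) :
    ∃ i, copy j y ∈ (replicatedDesign b v' copy fresh i).take (m + (j + 1) * v') :=
  let ⟨i, hi⟩ := hmatch y
  ⟨i, copy_mem_take_replicatedDesign_of_mem_take hU hi j⟩

variable (copy fresh) in
theorem exists_copies_mem_take_replicatedDesign (hU : ∀ i, ((b i).take v').length = v')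
    (hR : ∀ i, ((b i).drop v').length = r)
    (hcover : ∀ x y : Fin v, x ≠ y → ∃ i, x ∈ b i ∧ y ∈ b i)
    (hmatch : ∀ x, ∃ i, x ∈ (b i).take v') (j j' : Fin n) (y y' : Fin v) (hj : (j : ℕ) ≤ j') :
    ∃ i, copy j y ∈ (replicatedDesign b v' copy fresh i).take (m + n * v' + (n - j) * r) ∧
      copy j' y' ∈ (replicatedDesign b v' copy fresh i).take (m + n * v' + (n - j) * r) := by
  obtain ⟨i, hy, hy'⟩ : ∃ i, y ∈ b i ∧ y' ∈ b i := by
    by_cases hyy : y = y'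
    · obtain ⟨i, hi⟩ := hmatch y
      exact ⟨i, List.mem_of_mem_take hi, hyy ▸ List.mem_of_mem_take hi⟩
    · exact hcover y y' hyy
  exact ⟨i, copy_mem_take_replicatedDesign hU hR hy j le_rfl,
    copy_mem_take_replicatedDesign hU hR hy' j' hj⟩

theorem tripletCond_replicatedDesign {α : ℕ} (hU : ∀ i, ((b i).take v').length = v')
    (hR : ∀ i, ((b i).drop v').length = r) (hr : v' ≤ r) (hm : m = n * r + v')
    (hα : 3 * m + n * v' ≤ α) (hcover : ∀ x y : Fin v, x ≠ y → ∃ i, x ∈ b i ∧ y ∈ b i)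
    (hmatch : ∀ x, ∃ i, x ∈ (b i).take v') (ρ : Fin K → ℕ)
    (hρcopy : ∀ j y, ρ (copy j y) = j + 1) (hρfresh : ∀ i t, ρ (fresh i t) = 0)
    (hsurj : ∀ e, (∃ j y, copy j y = e) ∨ ∃ i t, fresh i t = e) :
    TripletCond d K α (replicatedDesign b v' copy fresh) := by
  have hfresh := fresh_mem_take_replicatedDesign b v' copy fresh
  have hcopy_of_pos : ∀ e, 0 < ρ e → ∃ j y, copy j y = e := fun e he =>
    (hsurj e).resolve_right fun ⟨i, t, hit⟩ => by rw [← hit, hρfresh] at he; omega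
  refine tripletCond_of_sorted ρ fun a b c hab hbc => ?_
  rcases hsurj a with ⟨j₁, y₁, rfl⟩ | ⟨i₁, t₁, rfl⟩
  · obtain ⟨j₂, y₂, rfl⟩ := hcopy_of_pos b (by rw [hρcopy] at hab; omega)
    obtain ⟨j₃, y₃, rfl⟩ := hcopy_of_pos c (by rw [hρcopy] at hab; omega)
    rw [hρcopy, hρcopy] at hab hbc
    obtain ⟨i₁, h₁⟩ := exists_copy_mem_take_replicatedDesign copy fresh hU hmatch j₁ y₁
    obtain ⟨i₂, h₂, h₃⟩ := exists_copies_mem_take_replicatedDesign copy fresh hU hR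
      hcover hmatch j₂ j₃ y₂ y₃ (by omega)
    have := add_one_mul_add_sub_mul_le hr (by omega : (j₁ : ℕ) ≤ j₂) j₂.2.le
    exact .of_single_pair (by omega) h₁ h₂ h₃
  rcases hsurj b with ⟨j₂, y₂, rfl⟩ | ⟨i₂, t₂, rfl⟩
  · obtain ⟨j₃, y₃, rfl⟩ := hcopy_of_pos c (by rw [hρcopy] at hbc; omega)
    rw [hρcopy, hρcopy] at hbc
    obtain ⟨i₂, h₂, h₃⟩ := exists_copies_mem_take_replicatedDesign copy fresh hU hR
      hcover hmatch j₂ j₃ y₂ y₃ (by omega)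
    have : (n - j₂) * r ≤ n * r := Nat.mul_le_mul_right r (Nat.sub_le n j₂)
    exact .of_single_pair (by omega) (hfresh i₁ t₁) h₂ h₃
  rcases hsurj c with ⟨j₃, y₃, rfl⟩ | ⟨i₃, t₃, rfl⟩
  · obtain ⟨i₃, h₃⟩ := exists_copy_mem_take_replicatedDesign copy fresh hU hmatch j₃ y₃
    have : (j₃ + 1) * v' ≤ n * v' := Nat.mul_le_mul_right v' j₃.2
    exact .of_singles (by omega) (hfresh i₁ t₁) (hfresh i₂ t₂) h₃
  · exact .of_singles (by omega) (hfresh i₁ t₁) (hfresh i₂ t₂) (hfresh i₃ t₃)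

theorem singletonCond_replicatedDesign {α : ℕ} (hU : ∀ i, ((b i).take v').length = v')
    (hR : ∀ i, ((b i).drop v').length = r) (hr : v' ≤ r) (hm : m = n * r + v')
    (hα : 3 * m + n * v' ≤ α) (hmatch : ∀ x, ∃ i, x ∈ (b i).take v') (ρ : Fin K → ℕ)
    (hρcopy : ∀ j y, ρ (copy j y) = j + 1) (hρfresh : ∀ i t, ρ (fresh i t) = 0)
    (hsurj : ∀ e, (∃ j y, copy j y = e) ∨ ∃ i t, fresh i t = e) :
    SingletonCond d K α (replicatedDesign b v' copy fresh) := by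
  intro e _
  rcases hsurj e with ⟨j, y, rfl⟩ | ⟨i, t, rfl⟩
  · have hmax : lMax (replicatedDesign b v' copy fresh) (copy j y) ≤
        m + n * v' + (n - j) * r := lMax_le_of_forall_not_mem_drop fun i he => by
      obtain ⟨j', hj', y', he⟩ := exists_copy_lt_of_mem_drop_replicatedDesign hU hR j.2.le he
      have := congrArg ρ he
      rw [hρcopy, hρcopy] at this
      omega
    obtain ⟨i, hi⟩ := exists_copy_mem_take_replicatedDesign copy fresh hU hmatch j y
    have := lMin_le_of_mem_take hi
    have := add_one_mul_add_sub_mul_le hr le_rfl j.2.le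
    omega
  · have hmax : lMax (replicatedDesign b v' copy fresh) (fresh i t) ≤ m :=
      lMax_le_of_forall_not_mem_drop fun i he => by
        obtain ⟨j, y, he⟩ := exists_copy_eq_of_mem_drop_replicatedDesign he
        have := congrArg ρ he
        rw [hρcopy, hρfresh] at this
        omega
    have := lMin_le_of_mem_take (fresh_mem_take_replicatedDesign b v' copy fresh i t)
    omega

end ReplicatedDesign

theorem stmt_6 (d k v v' n m α : ℕ) (hd : 3 ≤ d) (hn : 1 ≤ n)
    (hv : v = v' * d)
    (hm : m + (n - 1) * v' = n * k)
    (hα : α + 2 * n * v' = 3 * n * k + 3 * v')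
    (b : Fin d → List (Fin v))
    (hlen : ∀ i, (b i).length = k)
    (hcover : ∀ x y : Fin v, x ≠ y → ∃ i, x ∈ b i ∧ y ∈ b i)
    (hpart : ∀ x : Fin v, ∃! i : Fin d, x ∈ (b i).take v') :
    IsPCD d (n * v + d * m) α
      (fun i =>
        List.ofFn (fun t : Fin m => pcdElem (n * v) d m (n * v + d * m) le_rfl i t) ++
        (List.ofFn (fun j : Fin n =>
          ((b i).take v').map (fun x => pcdElem 0 n v (n * v + d * m) (by simp) j x))).flatten ++
        ((List.ofFn (fun j : Fin n =>
          ((b i).drop v').map (fun x => pcdElem 0 n v (n * v + d * m) (by simp) j x))).reverse).flatten) := by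
  have hmatch : ∀ x, ∃ i, x ∈ (b i).take v' := fun x => (hpart x).exists
  have hk : 2 * v' ≤ k := two_mul_le_of_covers_pairs (by omega) hv b hlen hcover
    fun x => (hmatch x).imp fun _ => List.mem_of_mem_take
  have hnk : n * (k - v') + n * v' = n * k := by rw [← Nat.mul_add, Nat.sub_add_cancel (by omega)]
  have hn1 : (n - 1) * v' + v' = n * v' := by rw [← Nat.add_one_mul, Nat.sub_add_cancel hn]
  have hU : ∀ i, ((b i).take v').length = v' := fun i => by simp [hlen]; omega
  have hR : ∀ i, ((b i).drop v').length = k - v' := fun i => by simp [hlen]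
  have hr : v' ≤ k - v' := by omega
  have hm' : m = n * (k - v') + v' := by linarith
  have hα' : 3 * m + n * v' ≤ α := by linarith
  exact ⟨tripletCond_replicatedDesign hU hR hr hm' hα' hcover hmatch (copyRank n v)
      copyRank_pcdElem_zero (copyRank_pcdElem_of_le le_rfl)
      exists_pcdElem_eq_or_exists_pcdElem_eq,
    singletonCond_replicatedDesign hU hR hr hm' hα' hmatch (copyRank n v)
      copyRank_pcdElem_zero (copyRank_pcdElem_of_le le_rfl)
      exists_pcdElem_eq_or_exists_pcdElem_eq⟩
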